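/- Suppose v(2) = 0 and let k ≥ 1 be an integer (corresponding to Kodaira type I_m^* with m = 2k even). Assume v(a₁) ≥ 1, v(a₂) = 1, v(a₃) ≥ k + 2, v(a₄) ≥ k + 2, v(a₆) ≥ 2k + 3, and moreover v(b₈) = 2k + 4. Let P = (x, y) be a point on E with v(x) > 0. Then: (a) if v(x) = 1, then v(φ₂(P)) = v(ψ₃(P)) = 4 and v(ψ₂²(P)) ≥ 4; (b) the range 1 < v(x) < k + 1 is impossible; (c) if v(x) ≥ k + 1, then v(φ₂(P)) = v(ψ₃(P)) = 2k + 4 (= m + 4) and v(ψ₂²(P)) ≥ 2k + 4. -/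

import Mathlib

/-!
On the curve `ψ₂² = (2y + a₁x + a₃)²`, so `v(ψ₂²(P))` is even or infinite. The hypotheses
give `v(b₂) = 1`, `v(b₄) ≥ k + 2`, `v(b₆) ≥ 2k + 3`. Put `n = v(x)`. For `2 ≤ n ≤ k` the
term `b₂x²` of `ψ₂²`, of odd valuation `2n + 1`, strictly dominates: impossible. For `n = 1`
(resp. `n ≥ k + 1`) all terms have valuation `≥ 3` (resp. `≥ 2k + 3`), and parity adds one.
For `n ≥ k + 1` the constant `b₈` then dominates both `φ₂` and `ψ₃`. For `n = 1`, `x⁴`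
dominates `φ₂`; and since `x²(4x + b₂) = ψ₂² - 2b₄x - b₆` has valuation `≥ 4`, we get
`v(4x + b₂) ≥ 2`, hence `v(3x + b₂) = 1` and `x³(3x + b₂)` dominates `ψ₃`.
-/

open Polynomial

namespace AddValuation

theorem map_natCast_nonneg {R Γ₀ : Type*} [Ring R] [LinearOrderedAddCommMonoidWithTop Γ₀]
    (v : AddValuation R Γ₀) (n : ℕ) : 0 ≤ v (n : R) := by
  induction n with
  | zero => simp [v.map_zero]
  | succ n ih => exact Nat.cast_succ (R := R) n ▸ v.map_le_add ih v.map_one.ge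

variable {R : Type*} [Ring R] (v : AddValuation R (WithTop ℤ)) {x y : R}

theorem coe_zero_le_map_ofNat (n : ℕ) [n.AtLeastTwo] :
    ((0 : ℤ) : WithTop ℤ) ≤ v (OfNat.ofNat n : R) := by
  have h := v.map_natCast_nonneg (OfNat.ofNat n)
  rwa [Nat.cast_ofNat] at h

theorem coe_le_map_mul {a b c : ℤ} (hx : (a : WithTop ℤ) ≤ v x)
    (hy : (b : WithTop ℤ) ≤ v y) (hc : c ≤ a + b) : (c : WithTop ℤ) ≤ v (x * y) := by
  rw [v.map_mul]
  exact (WithTop.coe_le_coe.2 hc).trans (WithTop.coe_add a b ▸ add_le_add hx hy)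

theorem map_mul_eq_coe {a b c : ℤ} (hx : v x = a) (hy : v y = b) (hc : a + b = c) :
    v (x * y) = c := by
  rw [v.map_mul, hx, hy, ← hc, WithTop.coe_add]

theorem coe_le_map_pow {a : ℤ} (hx : (a : WithTop ℤ) ≤ v x) (n : ℕ) :
    ((n * a : ℤ) : WithTop ℤ) ≤ v (x ^ n) := by
  rw [v.map_pow, ← nsmul_eq_mul, WithTop.coe_nsmul]
  exact nsmul_le_nsmul_right hx n

theorem map_pow_eq_coe {a : ℤ} (hx : v x = a) (n : ℕ) :
    v (x ^ n) = ((n * a : ℤ) : WithTop ℤ) := by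
  rw [v.map_pow, hx, ← nsmul_eq_mul, WithTop.coe_nsmul]

theorem map_add_eq_coe_of_lt {a c : ℤ} (hx : v x = a) (hy : (c : WithTop ℤ) ≤ v y)
    (hac : a < c) : v (x + y) = a := by
  rw [v.map_add_eq_of_lt_left (hx ▸ (WithTop.coe_lt_coe.2 hac).trans_le hy), hx]

theorem coe_sub_le_of_coe_le_map_mul {a c : ℤ} (hx : v x = a)
    (h : (c : WithTop ℤ) ≤ v (x * y)) : ((c - a : ℤ) : WithTop ℤ) ≤ v y := by
  rw [v.map_mul, hx] at h
  revert h
  induction v y using WithTop.recTopCoe with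
  | top => exact fun _ => le_top
  | coe b =>
    intro h
    norm_cast at h ⊢
    omega

theorem map_sq_ne_coe_of_odd {c : ℤ} (hc : Odd c) (x : R) : v (x ^ 2) ≠ c := by
  rw [v.map_pow]
  induction v x using WithTop.recTopCoe with
  | top => simp [two_nsmul]
  | coe b =>
    norm_cast
    rintro rfl
    exact Int.not_even_iff_odd.2 hc ⟨b, two_nsmul b ▸ rfl⟩

theorem coe_add_one_le_map_sq_of_odd {c : ℤ} (hc : Odd c) (h : (c : WithTop ℤ) ≤ v (x ^ 2)) :
    ((c + 1 : ℤ) : WithTop ℤ) ≤ v (x ^ 2) := by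
  have hne := v.map_sq_ne_coe_of_odd hc x
  revert h hne
  induction v (x ^ 2) using WithTop.recTopCoe with
  | top => exact fun _ _ => le_top
  | coe b =>
    intro h hne
    norm_cast at h hne ⊢
    omega

end AddValuation

namespace WeierstrassCurve

variable {R : Type*} [CommRing R] (W : WeierstrassCurve R)

theorem eval_Ψ₂Sq (x : R) :
    W.Ψ₂Sq.eval x = 4 * x ^ 3 + W.b₂ * x ^ 2 + 2 * W.b₄ * x + W.b₆ := by
  simp [Ψ₂Sq]

theorem eval_Ψ₃ (x : R) :
    W.Ψ₃.eval x = 3 * x ^ 4 + W.b₂ * x ^ 3 + 3 * W.b₄ * x ^ 2 + 3 * W.b₆ * x + W.b₈ := by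
  simp [Ψ₃]

theorem eval_Φ_two (x : R) :
    (W.Φ 2).eval x = x ^ 4 - W.b₄ * x ^ 2 - 2 * W.b₆ * x - W.b₈ := by
  simp [Φ_two]

variable {W} in
theorem Affine.Equation.eval_Ψ₂Sq_eq_sq {x y : R} (h : W.toAffine.Equation x y) :
    W.Ψ₂Sq.eval x = (2 * y + W.a₁ * x + W.a₃) ^ 2 := by
  have h_sq := congrArg (evalEval x y) W.ψ₂_sq
  simp only [evalEval_C, evalEval_add, evalEval_mul, evalEval_pow, ψ₂,
    Affine.evalEval_polynomialY] at h_sq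
  rw [h, mul_zero, add_zero] at h_sq
  exact h_sq.symm

section Valuation

variable (v : AddValuation R (WithTop ℤ)) {k : ℤ} {x y : R}

theorem val_b₂_eq_one (hv2 : v 2 = 0) (ha₁ : 1 ≤ v W.a₁) (ha₂ : v W.a₂ = 1) :
    v W.b₂ = ((1 : ℤ) : WithTop ℤ) := by
  have h4 : v 4 = ((0 : ℤ) : WithTop ℤ) := by
    rw [show (4 : R) = 2 * 2 by norm_num]
    exact v.map_mul_eq_coe hv2 hv2 rfl
  rw [b₂, add_comm]
  exact v.map_add_eq_coe_of_lt (v.map_mul_eq_coe h4 ha₂ rfl) (c := 2)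
    (sq W.a₁ ▸ v.coe_le_map_mul ha₁ ha₁ le_rfl) one_lt_two

theorem le_val_b₄ (ha₁ : 0 ≤ v W.a₁) (ha₃ : ((k + 2 : ℤ) : WithTop ℤ) ≤ v W.a₃)
    (ha₄ : ((k + 2 : ℤ) : WithTop ℤ) ≤ v W.a₄) : ((k + 2 : ℤ) : WithTop ℤ) ≤ v W.b₄ :=
  v.map_le_add (v.coe_le_map_mul (v.coe_zero_le_map_ofNat 2) ha₄ (by omega))
    (v.coe_le_map_mul ha₁ ha₃ (by omega))

theorem le_val_b₆ (ha₃ : ((k + 2 : ℤ) : WithTop ℤ) ≤ v W.a₃)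
    (ha₆ : ((2 * k + 3 : ℤ) : WithTop ℤ) ≤ v W.a₆) :
    ((2 * k + 3 : ℤ) : WithTop ℤ) ≤ v W.b₆ :=
  v.map_le_add (sq W.a₃ ▸ v.coe_le_map_mul ha₃ ha₃ (by omega))
    (v.coe_le_map_mul (v.coe_zero_le_map_ofNat 4) ha₆ (by omega))

theorem two_mul_add_one_le_val_eval_Ψ₂Sq {m : ℤ} (hb₂ : ((1 : ℤ) : WithTop ℤ) ≤ v W.b₂)
    (hb₄ : ((k + 2 : ℤ) : WithTop ℤ) ≤ v W.b₄) (hb₆ : ((2 * k + 3 : ℤ) : WithTop ℤ) ≤ v W.b₆)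
    (hx : (m : WithTop ℤ) ≤ v x) (hm : 1 ≤ m) (hmk : m ≤ k + 1) :
    ((2 * m + 1 : ℤ) : WithTop ℤ) ≤ v (W.Ψ₂Sq.eval x) := by
  rw [eval_Ψ₂Sq]
  refine v.map_le_add (v.map_le_add (v.map_le_add ?_ ?_) ?_)
    ((WithTop.coe_le_coe.2 (by omega)).trans hb₆)
  · exact v.coe_le_map_mul (v.coe_zero_le_map_ofNat 4) (v.coe_le_map_pow hx 3) (by omega)
  · exact v.coe_le_map_mul hb₂ (v.coe_le_map_pow hx 2) (by omega)
  · exact v.coe_le_map_mul (v.coe_le_map_mul (v.coe_zero_le_map_ofNat 2) hb₄ le_rfl) hx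
      (by omega)

theorem val_eval_Ψ₂Sq_of_val_eq {n : ℤ} (hb₂ : v W.b₂ = ((1 : ℤ) : WithTop ℤ))
    (hb₄ : ((k + 2 : ℤ) : WithTop ℤ) ≤ v W.b₄) (hb₆ : ((2 * k + 3 : ℤ) : WithTop ℤ) ≤ v W.b₆)
    (hx : v x = n) (hn : 2 ≤ n) (hnk : n ≤ k) :
    v (W.Ψ₂Sq.eval x) = ((2 * n + 1 : ℤ) : WithTop ℤ) := by
  rw [eval_Ψ₂Sq, show 4 * x ^ 3 + W.b₂ * x ^ 2 + 2 * W.b₄ * x + W.b₆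
    = W.b₂ * x ^ 2 + (4 * x ^ 3 + 2 * W.b₄ * x + W.b₆) by ring]
  refine v.map_add_eq_coe_of_lt (v.map_mul_eq_coe hb₂ (v.map_pow_eq_coe hx 2) (by ring))
    (c := 2 * n + 2)
    (v.map_le_add (v.map_le_add ?_ ?_) ((WithTop.coe_le_coe.2 (by omega)).trans hb₆)) (by omega)
  · exact v.coe_le_map_mul (v.coe_zero_le_map_ofNat 4) (v.coe_le_map_pow hx.ge 3) (by omega)
  · exact v.coe_le_map_mul (v.coe_le_map_mul (v.coe_zero_le_map_ofNat 2) hb₄ le_rfl) hx.ge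
      (by omega)

variable {W} in
theorem Affine.Equation.two_mul_add_two_le_val_eval_Ψ₂Sq (h : W.toAffine.Equation x y)
    {m : ℤ} (hb₂ : ((1 : ℤ) : WithTop ℤ) ≤ v W.b₂) (hb₄ : ((k + 2 : ℤ) : WithTop ℤ) ≤ v W.b₄)
    (hb₆ : ((2 * k + 3 : ℤ) : WithTop ℤ) ≤ v W.b₆) (hx : (m : WithTop ℤ) ≤ v x) (hm : 1 ≤ m)
    (hmk : m ≤ k + 1) : ((2 * m + 2 : ℤ) : WithTop ℤ) ≤ v (W.Ψ₂Sq.eval x) := by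
  have h₁ := W.two_mul_add_one_le_val_eval_Ψ₂Sq v hb₂ hb₄ hb₆ hx hm hmk
  rw [h.eval_Ψ₂Sq_eq_sq] at h₁ ⊢
  simpa only [add_assoc, one_add_one_eq_two] using
    v.coe_add_one_le_map_sq_of_odd (odd_two_mul_add_one m) h₁

variable {W} in
theorem Affine.Equation.not_one_lt_val_lt (h : W.toAffine.Equation x y)
    (hb₂ : v W.b₂ = ((1 : ℤ) : WithTop ℤ)) (hb₄ : ((k + 2 : ℤ) : WithTop ℤ) ≤ v W.b₄)
    (hb₆ : ((2 * k + 3 : ℤ) : WithTop ℤ) ≤ v W.b₆) :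
    ¬ (1 < v x ∧ v x < ((k + 1 : ℤ) : WithTop ℤ)) := by
  rintro ⟨hlo, hhi⟩
  obtain ⟨n, hn⟩ := WithTop.ne_top_iff_exists.1 hhi.ne_top
  rw [← hn] at hlo hhi
  have hΨ := W.val_eval_Ψ₂Sq_of_val_eq v hb₂ hb₄ hb₆ hn.symm (by exact_mod_cast hlo)
    (by have := WithTop.coe_lt_coe.1 hhi; omega)
  rw [h.eval_Ψ₂Sq_eq_sq] at hΨ
  exact v.map_sq_ne_coe_of_odd (odd_two_mul_add_one n) _ hΨ

theorem val_three_mul_add_b₂ (hb₄ : ((k + 2 : ℤ) : WithTop ℤ) ≤ v W.b₄)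
    (hb₆ : ((2 * k + 3 : ℤ) : WithTop ℤ) ≤ v W.b₆) (hk : 1 ≤ k)
    (hx : v x = ((1 : ℤ) : WithTop ℤ))
    (hΨ : ((4 : ℤ) : WithTop ℤ) ≤ v (W.Ψ₂Sq.eval x)) :
    v (3 * x + W.b₂) = ((1 : ℤ) : WithTop ℤ) := by
  have h4 : ((4 : ℤ) : WithTop ℤ) ≤ v (x ^ 2 * (4 * x + W.b₂)) := by
    rw [show x ^ 2 * (4 * x + W.b₂) = W.Ψ₂Sq.eval x - (2 * W.b₄ * x + W.b₆) by
      rw [eval_Ψ₂Sq]; ring]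
    refine v.map_le_sub hΨ (v.map_le_add ?_ ((WithTop.coe_le_coe.2 (by omega)).trans hb₆))
    exact v.coe_le_map_mul (v.coe_le_map_mul (v.coe_zero_le_map_ofNat 2) hb₄ le_rfl) hx.ge
      (by omega)
  rw [show 3 * x + W.b₂ = -x + (4 * x + W.b₂) by ring]
  exact v.map_add_eq_coe_of_lt ((v.map_neg x).trans hx)
    (v.coe_sub_le_of_coe_le_map_mul (v.map_pow_eq_coe hx 2) h4) (by norm_num)

theorem val_eval_Ψ₃_of_val_eq_one (hb₄ : ((k + 2 : ℤ) : WithTop ℤ) ≤ v W.b₄)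
    (hb₆ : ((2 * k + 3 : ℤ) : WithTop ℤ) ≤ v W.b₆)
    (hb₈ : v W.b₈ = ((2 * k + 4 : ℤ) : WithTop ℤ))
    (hk : 1 ≤ k) (hx : v x = ((1 : ℤ) : WithTop ℤ))
    (h₃ : v (3 * x + W.b₂) = ((1 : ℤ) : WithTop ℤ)) :
    v (W.Ψ₃.eval x) = ((4 : ℤ) : WithTop ℤ) := by
  rw [eval_Ψ₃, show 3 * x ^ 4 + W.b₂ * x ^ 3 + 3 * W.b₄ * x ^ 2 + 3 * W.b₆ * x + W.b₈
    = x ^ 3 * (3 * x + W.b₂) + (3 * W.b₄ * x ^ 2 + 3 * W.b₆ * x + W.b₈) by ring]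
  refine v.map_add_eq_coe_of_lt (v.map_mul_eq_coe (v.map_pow_eq_coe hx 3) h₃ (by norm_num))
    (c := 5)
    (v.map_le_add (v.map_le_add ?_ ?_) ((WithTop.coe_le_coe.2 (by omega)).trans hb₈.ge))
    (by norm_num)
  · exact v.coe_le_map_mul (v.coe_le_map_mul (v.coe_zero_le_map_ofNat 3) hb₄ le_rfl)
      (v.coe_le_map_pow hx.ge 2) (by omega)
  · exact v.coe_le_map_mul (v.coe_le_map_mul (v.coe_zero_le_map_ofNat 3) hb₆ le_rfl) hx.ge
      (by omega)

theorem val_eval_Φ_two_of_val_eq_one (hb₄ : ((k + 2 : ℤ) : WithTop ℤ) ≤ v W.b₄)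
    (hb₆ : ((2 * k + 3 : ℤ) : WithTop ℤ) ≤ v W.b₆)
    (hb₈ : v W.b₈ = ((2 * k + 4 : ℤ) : WithTop ℤ))
    (hk : 1 ≤ k) (hx : v x = ((1 : ℤ) : WithTop ℤ)) :
    v ((W.Φ 2).eval x) = ((4 : ℤ) : WithTop ℤ) := by
  rw [eval_Φ_two, show x ^ 4 - W.b₄ * x ^ 2 - 2 * W.b₆ * x - W.b₈
    = x ^ 4 + -(W.b₄ * x ^ 2 + 2 * W.b₆ * x + W.b₈) by ring]
  refine v.map_add_eq_coe_of_lt (v.map_pow_eq_coe hx 4) (c := 5) ?_ (by norm_num)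
  rw [v.map_neg]
  refine v.map_le_add (v.map_le_add ?_ ?_) ((WithTop.coe_le_coe.2 (by omega)).trans hb₈.ge)
  · exact v.coe_le_map_mul hb₄ (v.coe_le_map_pow hx.ge 2) (by omega)
  · exact v.coe_le_map_mul (v.coe_le_map_mul (v.coe_zero_le_map_ofNat 2) hb₆ le_rfl) hx.ge
      (by omega)

theorem val_eval_Ψ₃_of_le_val (hb₂ : ((1 : ℤ) : WithTop ℤ) ≤ v W.b₂)
    (hb₄ : ((k + 2 : ℤ) : WithTop ℤ) ≤ v W.b₄) (hb₆ : ((2 * k + 3 : ℤ) : WithTop ℤ) ≤ v W.b₆)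
    (hb₈ : v W.b₈ = ((2 * k + 4 : ℤ) : WithTop ℤ)) (hk : 1 ≤ k)
    (hx : ((k + 1 : ℤ) : WithTop ℤ) ≤ v x) :
    v (W.Ψ₃.eval x) = ((2 * k + 4 : ℤ) : WithTop ℤ) := by
  rw [eval_Ψ₃, add_comm]
  refine v.map_add_eq_coe_of_lt hb₈ (c := 2 * k + 5)
    (v.map_le_add (v.map_le_add (v.map_le_add ?_ ?_) ?_) ?_) (by omega)
  · exact v.coe_le_map_mul (v.coe_zero_le_map_ofNat 3) (v.coe_le_map_pow hx 4) (by omega)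
  · exact v.coe_le_map_mul hb₂ (v.coe_le_map_pow hx 3) (by omega)
  · exact v.coe_le_map_mul (v.coe_le_map_mul (v.coe_zero_le_map_ofNat 3) hb₄ le_rfl)
      (v.coe_le_map_pow hx 2) (by omega)
  · exact v.coe_le_map_mul (v.coe_le_map_mul (v.coe_zero_le_map_ofNat 3) hb₆ le_rfl) hx
      (by omega)

theorem val_eval_Φ_two_of_le_val (hb₄ : ((k + 2 : ℤ) : WithTop ℤ) ≤ v W.b₄)
    (hb₆ : ((2 * k + 3 : ℤ) : WithTop ℤ) ≤ v W.b₆)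
    (hb₈ : v W.b₈ = ((2 * k + 4 : ℤ) : WithTop ℤ))
    (hk : 1 ≤ k) (hx : ((k + 1 : ℤ) : WithTop ℤ) ≤ v x) :
    v ((W.Φ 2).eval x) = ((2 * k + 4 : ℤ) : WithTop ℤ) := by
  rw [eval_Φ_two, show x ^ 4 - W.b₄ * x ^ 2 - 2 * W.b₆ * x - W.b₈
    = -W.b₈ + (x ^ 4 - W.b₄ * x ^ 2 - 2 * W.b₆ * x) by ring]
  refine v.map_add_eq_coe_of_lt ((v.map_neg _).trans hb₈) (c := 2 * k + 5)
    (v.map_le_sub (v.map_le_sub ?_ ?_) ?_) (by omega)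
  · exact v.coe_le_map_pow hx 4 |>.trans' (WithTop.coe_le_coe.2 (by omega))
  · exact v.coe_le_map_mul hb₄ (v.coe_le_map_pow hx 2) (by omega)
  · exact v.coe_le_map_mul (v.coe_le_map_mul (v.coe_zero_le_map_ofNat 2) hb₆ le_rfl) hx
      (by omega)

end Valuation

end WeierstrassCurve

theorem greatest_common_valuation_stmt_8_general {K : Type*} [Field K]
    (v : K → WithTop ℤ)
    (hv_top : ∀ z : K, v z = ⊤ ↔ z = 0)
    (hv_mul : ∀ z w : K, v (z * w) = v z + v w)
    (hv_add : ∀ z w : K, min (v z) (v w) ≤ v (z + w))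
    (hv2 : v (2 : K) = 0)
    (k : ℤ) (hk : 1 ≤ k)
    (W : WeierstrassCurve K)
    (ha₁ : 1 ≤ v W.a₁) (ha₂ : v W.a₂ = 1)
    (ha₃ : ((k + 2 : ℤ) : WithTop ℤ) ≤ v W.a₃)
    (ha₄ : ((k + 2 : ℤ) : WithTop ℤ) ≤ v W.a₄)
    (ha₆ : ((2 * k + 3 : ℤ) : WithTop ℤ) ≤ v W.a₆)
    (hb₈ : v W.b₈ = ((2 * k + 4 : ℤ) : WithTop ℤ))
    (x y : K) (hP : W.toAffine.Equation x y) :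
    (v x = 1 →
      v ((W.Φ 2).eval x) = ((4 : ℤ) : WithTop ℤ) ∧
      v (W.Ψ₃.eval x) = ((4 : ℤ) : WithTop ℤ) ∧
      ((4 : ℤ) : WithTop ℤ) ≤ v (W.Ψ₂Sq.eval x)) ∧
    (¬ (1 < v x ∧ v x < ((k + 1 : ℤ) : WithTop ℤ))) ∧
    (((k + 1 : ℤ) : WithTop ℤ) ≤ v x →
      v ((W.Φ 2).eval x) = ((2 * k + 4 : ℤ) : WithTop ℤ) ∧
      v (W.Ψ₃.eval x) = ((2 * k + 4 : ℤ) : WithTop ℤ) ∧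
      ((2 * k + 4 : ℤ) : WithTop ℤ) ≤ v (W.Ψ₂Sq.eval x)) := by
  obtain ⟨v, rfl⟩ : ∃ v' : AddValuation K (WithTop ℤ), ⇑v' = v :=
    ⟨.of v ((hv_top 0).2 rfl) (WithTop.add_left_cancel ((hv_top 1).not.2 one_ne_zero)
      (by rw [add_zero, ← hv_mul, one_mul])).symm hv_add hv_mul, rfl⟩
  have hb₂ := W.val_b₂_eq_one v hv2 ha₁ ha₂
  have hb₄ := W.le_val_b₄ v (zero_le_one.trans ha₁) ha₃ ha₄
  have hb₆ := W.le_val_b₆ v ha₃ ha₆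
  refine ⟨fun hx => ?_, hP.not_one_lt_val_lt v hb₂ hb₄ hb₆, fun hx => ?_⟩
  · replace hx : v x = ((1 : ℤ) : WithTop ℤ) := hx
    have hΨ₂Sq :=
      hP.two_mul_add_two_le_val_eval_Ψ₂Sq v hb₂.ge hb₄ hb₆ hx.ge le_rfl (by omega)
    have h₃ := W.val_three_mul_add_b₂ v hb₄ hb₆ hk hx hΨ₂Sq
    exact ⟨W.val_eval_Φ_two_of_val_eq_one v hb₄ hb₆ hb₈ hk hx,
      W.val_eval_Ψ₃_of_val_eq_one v hb₄ hb₆ hb₈ hk hx h₃, hΨ₂Sq⟩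
  · have hΨ₂Sq := hP.two_mul_add_two_le_val_eval_Ψ₂Sq v hb₂.ge hb₄ hb₆ hx (by omega) le_rfl
    refine ⟨W.val_eval_Φ_two_of_le_val v hb₄ hb₆ hb₈ hk hx,
      W.val_eval_Ψ₃_of_le_val v hb₂.ge hb₄ hb₆ hb₈ hk hx, ?_⟩
    rwa [show 2 * (k + 1) + 2 = 2 * k + 4 by ring] at hΨ₂Sq

/-- (Kodaira type `I_m^*`, `m = 2k` even, residue characteristic `≠ 2`.)
Let `K` be a field with a normalised discrete valuation `v` with uniformiser `π`, suppose
`v(2) = 0`, and let `k ≥ 1`.  Let `E/K` be a Weierstrass curve with `v(a₁) ≥ 1`, `v(a₂) = 1`,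
`v(a₃) ≥ k + 2`, `v(a₄) ≥ k + 2`, `v(a₆) ≥ 2k + 3` and `v(b₈) = 2k + 4`.
Let `P = (x, y)` be a point on `E` with `v(x) > 0`.  Then:
(a) if `v(x) = 1`, then `v(φ₂(P)) = v(ψ₃(P)) = 4` and `v(ψ₂²(P)) ≥ 4`;
(b) the range `1 < v(x) < k + 1` is impossible;
(c) if `v(x) ≥ k + 1`, then `v(φ₂(P)) = v(ψ₃(P)) = 2k + 4` and `v(ψ₂²(P)) ≥ 2k + 4`. -/
theorem greatest_common_valuation_stmt_8 {K : Type*} [Field K]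
    (v : K → WithTop ℤ)
    (hv_top : ∀ z : K, v z = ⊤ ↔ z = 0)
    (hv_mul : ∀ z w : K, v (z * w) = v z + v w)
    (hv_add : ∀ z w : K, min (v z) (v w) ≤ v (z + w))
    (π : K) (hπ : v π = 1)
    (hv2 : v (2 : K) = 0)
    (k : ℤ) (hk : 1 ≤ k)
    (W : WeierstrassCurve K)
    (ha₁ : 1 ≤ v W.a₁) (ha₂ : v W.a₂ = 1)
    (ha₃ : ((k + 2 : ℤ) : WithTop ℤ) ≤ v W.a₃)
    (ha₄ : ((k + 2 : ℤ) : WithTop ℤ) ≤ v W.a₄)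
    (ha₆ : ((2 * k + 3 : ℤ) : WithTop ℤ) ≤ v W.a₆)
    (hb₈ : v W.b₈ = ((2 * k + 4 : ℤ) : WithTop ℤ))
    (x y : K) (hP : W.toAffine.Equation x y) (hx : 0 < v x) :
    (v x = 1 →
      v ((W.Φ 2).eval x) = ((4 : ℤ) : WithTop ℤ) ∧
      v (W.Ψ₃.eval x) = ((4 : ℤ) : WithTop ℤ) ∧
      ((4 : ℤ) : WithTop ℤ) ≤ v (W.Ψ₂Sq.eval x)) ∧
    (¬ (1 < v x ∧ v x < ((k + 1 : ℤ) : WithTop ℤ))) ∧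
    (((k + 1 : ℤ) : WithTop ℤ) ≤ v x →
      v ((W.Φ 2).eval x) = ((2 * k + 4 : ℤ) : WithTop ℤ) ∧
      v (W.Ψ₃.eval x) = ((2 * k + 4 : ℤ) : WithTop ℤ) ∧
      ((2 * k + 4 : ℤ) : WithTop ℤ) ≤ v (W.Ψ₂Sq.eval x)) :=
  greatest_common_valuation_stmt_8_general v hv_top hv_mul hv_add hv2 k hk W ha₁ ha₂ ha₃ ha₄ ha₆ hb₈
    x y hP
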